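/- arXiv:1004.0521 — 4 statements merged into one kernel-verified Lean document; each statement's English description precedes it below -/
import Mathlib

section
/- Let D = ∂_x − y²∂_y be the derivation of k[x,y] over a field k of characteristic zero. Then 1 ∈ Im D, but y ∉ Im D; consequently Im D is not a Mathieu subspace of k[x,y]. -/
/-! On the curve `γ(t) = (t⁻¹, t)` one has `(g ∘ γ)' = -t⁻² · (D g) ∘ γ`, so `(D g) ∘ γ = -t² (g ∘ γ)'`
has no `t¹`-coefficient, the `t⁻¹`-coefficient of a derivative of a Laurent polynomial being zero.
Hence the functional "coefficient of `t¹` in `p(t⁻¹, t)`" kills `Im D`, while it sends `y` to `1`.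
Since `1 = D x`, all powers of `1` lie in `Im D`, but `y · 1ᵐ` never does. -/

open MvPolynomial

def IsMathieu (k : Type*) {R : Type*} [Field k] [CommRing R] [Algebra k R]
    (M : Submodule k R) : Prop :=
  ∀ a : R, (∀ m : ℕ, 1 ≤ m → a ^ m ∈ M) →
    ∀ b : R, ∃ N : ℕ, ∀ m : ℕ, N ≤ m → b * a ^ m ∈ M

namespace MvPolynomial
open LaurentPolynomial

variable (R : Type*) [CommRing R]

noncomputable def hyperbolaCoeff : MvPolynomial (Fin 2) R →ₗ[R] R :=
  Finsupp.lapply 1 ∘ₗ (AddMonoidAlgebra.coeffLinearEquiv R).toLinearMap ∘ₗ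
    (aeval ![T (-1), T 1] : MvPolynomial (Fin 2) R →ₐ[R] R[T;T⁻¹]).toLinearMap

variable {R}

theorem hyperbolaCoeff_monomial (d : Fin 2 →₀ ℕ) (c : R) :
    hyperbolaCoeff R (monomial d c) = if d 1 = d 0 + 1 then c else 0 := by
  have hT : (aeval ![T (-1), T 1] (monomial d c) : R[T;T⁻¹]) =
      LaurentPolynomial.C c * T ((d 1 : ℤ) - d 0) := by
    rw [aeval_monomial, Finsupp.prod_fintype _ _ (fun i => pow_zero _), Fin.prod_univ_two]
    simp only [Matrix.cons_val_zero, Matrix.cons_val_one, T_pow, ← T_add]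
    congr 2
    ring
  show (aeval ![T (-1), T 1] (monomial d c) : R[T;T⁻¹]).coeff 1 = _
  rw [hT, ← single_eq_C_mul_T, AddMonoidAlgebra.coeff_single, Finsupp.single_apply]
  congr 1
  apply propext
  omega

theorem hyperbolaCoeff_X_one : hyperbolaCoeff R (X 1) = 1 := by
  simp [X, hyperbolaCoeff_monomial]

theorem hyperbolaCoeff_mkDerivation (g : MvPolynomial (Fin 2) R) :
    hyperbolaCoeff R (mkDerivation R ![1, -(X 1 ^ 2)] g) = 0 := by
  induction g using MvPolynomial.induction_on' with
  | add p q hp hq => rw [map_add, map_add, hp, hq, add_zero]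
  | monomial d c =>
    rw [mkDerivation_monomial, Finsupp.sum_fintype _ _ (fun i => by simp), Fin.sum_univ_two]
    simp only [Matrix.cons_val_zero, Matrix.cons_val_one, smul_eq_mul, mul_one, mul_neg,
      X_pow_eq_monomial, monomial_mul]
    rw [map_smul, map_add, map_neg, hyperbolaCoeff_monomial, hyperbolaCoeff_monomial]
    simp only [Finsupp.tsub_apply, Finsupp.add_apply, Finsupp.single_apply, zero_ne_one, one_ne_zero, if_false, if_true, Nat.sub_zero, add_zero]
    -- `D(xᵃyᵇ) = a xᵃ⁻¹yᵇ - b xᵃyᵇ⁺¹`, and for `a, b > 0` either term contributes iff `a = b`.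
    split_ifs with h₀ h₁ h₁
    · rw [show d 0 = d 1 by omega, add_neg_cancel, smul_zero]
    · rw [show d 0 = 0 by omega]; simp
    · rw [show d 1 = 0 by omega]; simp
    · simp

end MvPolynomial

theorem im_not_mathieu_general (k : Type*) [Field k] :
    letI D : Derivation k (MvPolynomial (Fin 2) k) (MvPolynomial (Fin 2) k) :=
      MvPolynomial.mkDerivation k ![1, -(X 1 ^ 2)]
    (1 : MvPolynomial (Fin 2) k) ∈ LinearMap.range D.toLinearMap ∧
    (X 1 : MvPolynomial (Fin 2) k) ∉ LinearMap.range D.toLinearMap ∧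
    ¬ IsMathieu k (LinearMap.range D.toLinearMap) := by
  set D : Derivation k (MvPolynomial (Fin 2) k) (MvPolynomial (Fin 2) k) :=
    mkDerivation k ![1, -(X 1 ^ 2)]
  have one_mem : (1 : MvPolynomial (Fin 2) k) ∈ LinearMap.range D.toLinearMap :=
    ⟨X 0, mkDerivation_X k _ 0⟩
  have X_one_notMem : (X 1 : MvPolynomial (Fin 2) k) ∉ LinearMap.range D.toLinearMap := by
    rintro ⟨g, hg⟩
    have h : hyperbolaCoeff k (X 1) = 0 := by
      rw [← hg]
      exact hyperbolaCoeff_mkDerivation g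
    rw [hyperbolaCoeff_X_one] at h
    exact one_ne_zero h
  refine ⟨one_mem, X_one_notMem, fun hM => ?_⟩
  obtain ⟨N, hN⟩ := hM 1 (fun m _ => by rwa [one_pow]) (X 1)
  exact X_one_notMem (by simpa using hN N le_rfl)

/-- For `D = ∂_x − y²∂_y` on `k[x,y]` (with `x = X 0`, `y = X 1`): `1 ∈ Im D`,
`y ∉ Im D`, and `Im D` is not a Mathieu subspace. -/
theorem im_not_mathieu (k : Type*) [Field k] [CharZero k] :
    letI D : Derivation k (MvPolynomial (Fin 2) k) (MvPolynomial (Fin 2) k) :=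
      MvPolynomial.mkDerivation k ![1, -(X 1 ^ 2)]
    (1 : MvPolynomial (Fin 2) k) ∈ LinearMap.range D.toLinearMap ∧
    (X 1 : MvPolynomial (Fin 2) k) ∉ LinearMap.range D.toLinearMap ∧
    ¬ IsMathieu k (LinearMap.range D.toLinearMap) :=
  im_not_mathieu_general k
end

section
/- Let k ⊆ L be a field extension, R a k-algebra, and M a k-subspace of R. If L ⊗_k M is a Mathieu subspace of the L-algebra L ⊗_k R, then M is a Mathieu subspace of the k-algebra R. -/
/-!
The map `r ↦ 1 ⊗ r` is a ring homomorphism `R → L ⊗[k] R`, and since `L` is faithfully flat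
over `k`, the preimage of `L ⊗_k M` under it is exactly `M`. The Mathieu property pulls back
along any ring homomorphism with this preimage property.
-/

theorem Submodule.one_tmul_mem_baseChange_iff {R A M : Type*} [CommRing R] [Ring A]
    [Algebra R A] [Module.FaithfullyFlat R A] [AddCommGroup M] [Module R M]
    {p : Submodule R M} {m : M} : (1 : A) ⊗ₜ[R] m ∈ p.baseChange A ↔ m ∈ p := by
  rw [← span_singleton_le_iff_mem m p, ← baseChange_le_iff (A := A), baseChange_span,
    Set.image_singleton, TensorProduct.mk_apply, span_singleton_le_iff_mem]

theorem IsMathieu.of_map_mem_iff {k L R S : Type*} [Field k] [Field L] [CommRing R]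
    [CommRing S] [Algebra k R] [Algebra L S] {M : Submodule k R} {N : Submodule L S}
    (f : R →+* S) (hf : ∀ r, f r ∈ N ↔ r ∈ M) (hN : IsMathieu L N) : IsMathieu k M := by
  intro a ha b
  obtain ⟨n₀, hn₀⟩ := hN (f a) (fun m hm ↦ by rw [← map_pow, hf]; exact ha m hm) (f b)
  exact ⟨n₀, fun m hm ↦ (hf _).1 (by simpa using hn₀ m hm)⟩

/-- If `L ⊗_k M` is a Mathieu subspace of `L ⊗_k R`, then `M` is a Mathieu subspace
of `R`. Here `L ⊗_k M` is realized as `M.baseChange L`, the `L`-subspace of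
`L ⊗[k] R` spanned by the elements `1 ⊗ m`, `m ∈ M`. -/
theorem isMathieu_of_baseChange (k L R : Type*) [Field k] [Field L] [Algebra k L]
    [CommRing R] [Algebra k R] (M : Submodule k R)
    (h : IsMathieu L (M.baseChange L : Submodule L (TensorProduct k L R))) :
    IsMathieu k M :=
  h.of_map_mem_iff Algebra.TensorProduct.includeRight.toRingHom
    fun _ ↦ Submodule.one_tmul_mem_baseChange_iff
end

section
/- Let a ∈ k be nonzero, m ≥ 1, and D = a·x·∂_x + (x^m + a·m·y)·∂_y on k[x,y]. Then Im D equals the maximal ideal (x, y). -/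
open MvPolynomial

section Aux
set_option linter.unusedSectionVars false
variable {k : Type*} [Field k] [CharZero k] (a : k) (m : ℕ)

local notation "D" => (mkDerivation k ![a • X 0, X 0 ^ m + (a * (m : k)) • X 1] :
  Derivation k (MvPolynomial (Fin 2) k) (MvPolynomial (Fin 2) k))

lemma Dbase (i : ℕ) : D (X 0 ^ (i+1)) = (a * (i+1 : ℕ)) • X 0 ^ (i+1) := by
  rw [Derivation.leibniz_pow, mkDerivation_X]
  simp only [Matrix.cons_val_zero, Nat.add_sub_cancel, smul_eq_mul, MvPolynomial.smul_eq_C_mul,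
    nsmul_eq_mul]
  push_cast [map_add, map_mul, map_natCast, map_one, Nat.cast_zero, map_zero]
  ring

lemma Drec (i j : ℕ) : D (X 0 ^ i * X 1 ^ (j+1)) =
    (a * ((i + m * (j+1) : ℕ) : k)) • (X 0 ^ i * X 1 ^ (j+1))
      + ((j+1 : ℕ) : k) • (X 0 ^ (i+m) * X 1 ^ j) := by
  rw [Derivation.leibniz, Derivation.leibniz_pow, Derivation.leibniz_pow, mkDerivation_X,
    mkDerivation_X]
  cases i with
  | zero =>
    simp only [Matrix.cons_val_zero, Matrix.cons_val_one, Matrix.head_cons, Nat.add_sub_cancel,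
      smul_eq_mul, MvPolynomial.smul_eq_C_mul, nsmul_eq_mul]
    push_cast [map_add, map_mul, map_natCast, map_one, Nat.cast_zero, map_zero]
    ring
  | succ i =>
    simp only [Matrix.cons_val_zero, Matrix.cons_val_one, Matrix.head_cons, Nat.add_sub_cancel,
      smul_eq_mul, MvPolynomial.smul_eq_C_mul, nsmul_eq_mul]
    push_cast [map_add, map_mul, map_natCast, map_one, Nat.cast_zero, map_zero]
    ring

lemma mon_mem (ha : a ≠ 0) (hm : 1 ≤ m) :
    ∀ j i : ℕ, 1 ≤ i + j → X 0 ^ i * X 1 ^ j ∈ LinearMap.range (D).toLinearMap := by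
  intro j
  induction j with
  | zero =>
    rintro (_ | i) h
    · omega
    refine ⟨(a * ((i:k)+1))⁻¹ • X 0 ^ (i+1), ?_⟩
    have hne : a * ((i:k)+1) ≠ 0 := mul_ne_zero ha (Nat.cast_add_one_ne_zero i)
    rw [LinearMap.map_smul, Derivation.coeFn_coe, Dbase a m i]
    push_cast
    rw [smul_smul, inv_mul_cancel₀ hne, one_smul, pow_zero, mul_one]
  | succ j ih =>
    intro i _
    have hpos : (0:ℕ) < i + m * (j+1) := by positivity
    have hne : a * ((i + m * (j+1) : ℕ) : k) ≠ 0 :=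
      mul_ne_zero ha (by exact_mod_cast hpos.ne')
    have key : X 0 ^ i * X 1 ^ (j+1) =
        (a * ((i + m * (j+1) : ℕ) : k))⁻¹ •
          (D (X 0 ^ i * X 1 ^ (j+1)) - ((j+1 : ℕ) : k) • (X 0 ^ (i+m) * X 1 ^ j)) := by
      rw [Drec a m i j, add_sub_cancel_right, smul_smul, inv_mul_cancel₀ hne, one_smul]
    rw [key]
    refine Submodule.smul_mem _ _ (Submodule.sub_mem _ ⟨_, rfl⟩ (Submodule.smul_mem _ _ ?_))
    exact ih (i+m) (by omega)

lemma mul_mon_mem (ha : a ≠ 0) (hm : 1 ≤ m) (q : MvPolynomial (Fin 2) k) :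
    ∀ i j : ℕ, 1 ≤ i + j → q * (X 0 ^ i * X 1 ^ j) ∈ LinearMap.range (D).toLinearMap := by
  induction q using MvPolynomial.induction_on with
  | C c =>
    intro i j h
    rw [← MvPolynomial.smul_eq_C_mul]
    exact Submodule.smul_mem _ _ (mon_mem a m ha hm j i h)
  | add p q hp hq =>
    intro i j h
    rw [add_mul]
    exact Submodule.add_mem _ (hp i j h) (hq i j h)
  | mul_X p n ih =>
    intro i j h
    fin_cases n
    · show p * X 0 * (X 0 ^ i * X 1 ^ j) ∈ _
      have : p * X 0 * (X 0 ^ i * X 1 ^ j) = p * (X 0 ^ (i+1) * X 1 ^ j) := by ring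
      rw [this]
      exact ih (i+1) j (by omega)
    · show p * X 1 * (X 0 ^ i * X 1 ^ j) ∈ _
      have : p * X 1 * (X 0 ^ i * X 1 ^ j) = p * (X 0 ^ i * X 1 ^ (j+1)) := by ring
      rw [this]
      exact ih i (j+1) (by omega)

end Aux

/-- For `D = a·x·∂_x + (x^m + a·m·y)·∂_y` on `k[x,y]` with `a ≠ 0` and `m ≥ 1`,
`Im D = (x, y)`. -/
theorem range_eq_xy (k : Type*) [Field k] [CharZero k] (a : k) (ha : a ≠ 0)
    (m : ℕ) (hm : 1 ≤ m) :
    LinearMap.range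
        (MvPolynomial.mkDerivation k ![a • X 0, X 0 ^ m + (a * (m : k)) • X 1] :
          Derivation k (MvPolynomial (Fin 2) k) (MvPolynomial (Fin 2) k)).toLinearMap =
      Submodule.restrictScalars k
        (Ideal.span {(X 0 : MvPolynomial (Fin 2) k), X 1}) := by
  set D := (mkDerivation k ![a • X 0, X 0 ^ m + (a * (m : k)) • X 1] :
    Derivation k (MvPolynomial (Fin 2) k) (MvPolynomial (Fin 2) k)) with hD
  have hX0 : (X 0 : MvPolynomial (Fin 2) k) ∈ Ideal.span {(X 0 : MvPolynomial (Fin 2) k), X 1} :=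
    Ideal.subset_span (by simp)
  have hX1 : (X 1 : MvPolynomial (Fin 2) k) ∈ Ideal.span {(X 0 : MvPolynomial (Fin 2) k), X 1} :=
    Ideal.subset_span (by simp)
  apply le_antisymm
  · rintro p ⟨q, rfl⟩
    rw [Submodule.restrictScalars_mem]
    induction q using MvPolynomial.induction_on with
    | C c => simp
    | add p q hp hq => rw [Derivation.coeFn_coe, map_add]; exact Ideal.add_mem _ hp hq
    | mul_X p n ih =>
      rw [Derivation.coeFn_coe] at ih ⊢
      rw [Derivation.leibniz, smul_eq_mul, smul_eq_mul]
      refine Ideal.add_mem _ (Ideal.mul_mem_left _ _ ?_) (Ideal.mul_mem_left _ _ ih)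
      fin_cases n
      · rw [hD, mkDerivation_X]
        simp only [Matrix.cons_val_zero, MvPolynomial.smul_eq_C_mul]
        exact Ideal.mul_mem_left _ _ hX0
      · rw [hD, mkDerivation_X]
        simp only [Matrix.cons_val_one, Matrix.head_cons, MvPolynomial.smul_eq_C_mul]
        exact Ideal.add_mem _ (Ideal.pow_mem_of_mem _ hX0 m hm) (Ideal.mul_mem_left _ _ hX1)
  · rintro p hp
    rw [Submodule.restrictScalars_mem] at hp
    obtain ⟨u, v, huv⟩ := Ideal.mem_span_pair.mp hp
    rw [← huv]
    refine Submodule.add_mem _ ?_ ?_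
    · have := mul_mon_mem a m ha hm u 1 0 (by omega)
      simpa using this
    · have := mul_mon_mem a m ha hm v 0 1 (by omega)
      simpa using this
end

section
/- Let D = a·(x·∂_x + y·∂_y) + x·∂_y on k[x,y] with a ∈ k. Then Im D is a Mathieu subspace of k[x,y]. -/
open MvPolynomial

noncomputable section JordanAux

variable {k : Type*} [Field k] [CharZero k]

/-- The derivation in question. -/
noncomputable def Dd (k : Type*) [Field k] (a : k) :
    Derivation k (MvPolynomial (Fin 2) k) (MvPolynomial (Fin 2) k) :=
  MvPolynomial.mkDerivation k ![a • X 0, a • X 1 + X 0]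

lemma Dd_X0 (a : k) : Dd k a (X 0) = a • X 0 := by
  simp [Dd]

lemma Dd_X1 (a : k) : Dd k a (X 1) = a • X 1 + X 0 := by
  simp [Dd]

lemma Dd_pow0 (a : k) (i : ℕ) : Dd k a (X 0 ^ i) = (a * i) • X 0 ^ i := by
  cases i with
  | zero => simp
  | succ n =>
    rw [Derivation.leibniz_pow, Dd_X0, Nat.add_sub_cancel]
    simp only [smul_eq_C_mul, smul_eq_mul, nsmul_eq_mul, map_mul, map_natCast]
    push_cast
    ring

lemma Dd_mono (a : k) (i j : ℕ) :
    Dd k a (X 0 ^ i * X 1 ^ (j + 1)) =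
      (a * (i + j + 1)) • (X 0 ^ i * X 1 ^ (j + 1)) +
        ((j : k) + 1) • (X 0 ^ (i + 1) * X 1 ^ j) := by
  rw [Derivation.leibniz, Derivation.leibniz_pow, Dd_X1, Dd_pow0, Nat.add_sub_cancel]
  simp only [smul_eq_C_mul, smul_eq_mul, nsmul_eq_mul, map_mul, map_add, map_natCast, map_one]
  push_cast
  ring

lemma mono_eq (s : Fin 2 →₀ ℕ) (c : k) :
    (monomial s c : MvPolynomial (Fin 2) k) = c • (X 0 ^ (s 0) * X 1 ^ (s 1)) := by
  rw [monomial_eq, smul_eq_C_mul]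
  congr 1
  rw [Finsupp.prod_fintype _ _ (fun i => pow_zero _), Fin.prod_univ_two]

lemma mem1 (a : k) (ha : a ≠ 0) :
    ∀ j i : ℕ, 1 ≤ i + j →
      X 0 ^ i * X 1 ^ j ∈ LinearMap.range (Dd k a).toLinearMap := by
  intro j
  induction j with
  | zero =>
    intro i hi
    have hD : Dd k a (X 0 ^ i) = (a * i) • X 0 ^ i := Dd_pow0 a i
    have hne : (a * i) ≠ 0 :=
      mul_ne_zero ha (Nat.cast_ne_zero.2 (by omega))
    have : X 0 ^ i * X 1 ^ 0 = (a * i)⁻¹ • Dd k a (X 0 ^ i) := by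
      rw [hD, smul_smul, inv_mul_cancel₀ hne, one_smul, pow_zero, mul_one]
    rw [this]
    exact Submodule.smul_mem _ _ ⟨_, rfl⟩
  | succ j ih =>
    intro i _
    have hne : (a * (i + j + 1 : ℕ)) ≠ 0 :=
      mul_ne_zero ha (Nat.cast_ne_zero.2 (by omega))
    have hD := Dd_mono a i j
    have hrec : ((j : k) + 1) • (X 0 ^ (i + 1) * X 1 ^ j) ∈
        LinearMap.range (Dd k a).toLinearMap :=
      Submodule.smul_mem _ _ (ih (i + 1) (by omega))
    have hmem : (a * (i + j + 1)) • (X 0 ^ i * X 1 ^ (j + 1)) ∈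
        LinearMap.range (Dd k a).toLinearMap := by
      have : (a * (i + j + 1)) • (X 0 ^ i * X 1 ^ (j + 1)) =
          Dd k a (X 0 ^ i * X 1 ^ (j + 1)) - ((j : k) + 1) • (X 0 ^ (i + 1) * X 1 ^ j) := by
        rw [hD]; ring_nf
      rw [this]
      exact Submodule.sub_mem _ ⟨_, rfl⟩ hrec
    have hcast : ((i : k) + j + 1) = ((i + j + 1 : ℕ) : k) := by push_cast; ring
    have : (X 0 ^ i * X 1 ^ (j + 1) : MvPolynomial (Fin 2) k) =
        (a * (i + j + 1 : ℕ))⁻¹ • ((a * ((i : k) + j + 1)) • (X 0 ^ i * X 1 ^ (j + 1))) := by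
      rw [smul_smul, hcast, inv_mul_cancel₀ hne, one_smul]
    rw [this]
    exact Submodule.smul_mem _ _ hmem

lemma mem2 (i j : ℕ) :
    X 0 ^ (i + 1) * X 1 ^ j ∈ LinearMap.range (Dd k (0 : k)).toLinearMap := by
  have hD := Dd_mono (0 : k) i j
  rw [zero_mul, zero_smul, zero_add] at hD
  have hne : ((j : k) + 1) ≠ 0 := Nat.cast_add_one_ne_zero j
  have : X 0 ^ (i + 1) * X 1 ^ j = ((j : k) + 1)⁻¹ • Dd k (0 : k) (X 0 ^ i * X 1 ^ (j + 1)) := by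
    rw [hD, smul_smul, inv_mul_cancel₀ hne, one_smul]
  rw [this]
  exact Submodule.smul_mem _ _ ⟨_, rfl⟩

lemma fwd1 (a : k) (p : MvPolynomial (Fin 2) k) : constantCoeff (Dd k a p) = 0 := by
  induction p using MvPolynomial.induction_on with
  | C c => simp
  | add p q hp hq => simp [hp, hq]
  | mul_X p i hp =>
    have hX : constantCoeff (Dd k a (X i)) = 0 := by
      fin_cases i <;> simp [Dd_X0, Dd_X1, smul_eq_C_mul]
    rw [Derivation.leibniz, smul_eq_mul, smul_eq_mul]
    simp [hX, hp]

lemma rev1 (a : k) (ha : a ≠ 0) (p : MvPolynomial (Fin 2) k)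
    (h : constantCoeff p = 0) : p ∈ LinearMap.range (Dd k a).toLinearMap := by
  rw [p.as_sum]
  refine Submodule.sum_mem _ fun d hd => ?_
  rw [mono_eq]
  refine Submodule.smul_mem _ _ (mem1 a ha (d 1) (d 0) ?_)
  by_contra hc
  push_neg at hc
  have hd0 : d = 0 := by
    ext i
    fin_cases i <;> simp <;> omega
  subst hd0
  rw [mem_support_iff] at hd
  exact hd (by rwa [← constantCoeff_eq])

lemma fwd2 (p : MvPolynomial (Fin 2) k) : X 0 ∣ Dd k (0 : k) p := by
  induction p using MvPolynomial.induction_on with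
  | C c => simp
  | add p q hp hq => rw [map_add]; exact dvd_add hp hq
  | mul_X p i hp =>
    have hX : X 0 ∣ Dd k (0 : k) (X i) := by
      fin_cases i <;> simp [Dd_X0, Dd_X1]
    rw [Derivation.leibniz, smul_eq_mul, smul_eq_mul]
    exact dvd_add (hX.mul_left p) (hp.mul_left _)

lemma rev2 (p : MvPolynomial (Fin 2) k) (h : X 0 ∣ p) :
    p ∈ LinearMap.range (Dd k (0 : k)).toLinearMap := by
  obtain ⟨g, rfl⟩ := h
  rw [g.as_sum, Finset.mul_sum]
  refine Submodule.sum_mem _ fun d hd => ?_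
  have : X 0 * monomial d (coeff d g) =
      (coeff d g) • (X 0 ^ (d 0 + 1) * X 1 ^ (d 1)) := by
    rw [mono_eq, smul_eq_C_mul, smul_eq_C_mul]
    ring
  rw [this]
  exact Submodule.smul_mem _ _ (mem2 (d 0) (d 1))

end JordanAux

/-- For `D = a·(x∂_x + y∂_y) + x·∂_y` on `k[x,y]`, `Im D` is a Mathieu subspace. -/
theorem jordan_block_mathieu (k : Type*) [Field k] [CharZero k] (a : k) :
    IsMathieu k
      (LinearMap.range
        (MvPolynomial.mkDerivation k ![a • X 0, a • X 1 + X 0] :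
          Derivation k (MvPolynomial (Fin 2) k) (MvPolynomial (Fin 2) k)).toLinearMap) := by
  show IsMathieu k (LinearMap.range (Dd k a).toLinearMap)
  intro f hf b
  have hf1 : f ∈ LinearMap.range (Dd k a).toLinearMap := by
    have := hf 1 le_rfl; rwa [pow_one] at this
  obtain ⟨p, hp⟩ := hf1
  rcases eq_or_ne a 0 with rfl | ha
  · have hdvd : X 0 ∣ f := hp ▸ fwd2 p
    refine ⟨1, fun m hm => ?_⟩
    exact rev2 _ ((hdvd.trans (dvd_pow_self f (by omega))).mul_left b)
  · have hcf : constantCoeff f = 0 := hp ▸ fwd1 a p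
    refine ⟨1, fun m hm => ?_⟩
    apply rev1 a ha
    rw [map_mul, map_pow, hcf, zero_pow (by omega), mul_zero]
end
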